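/- (Solution of the linear inequality Ax ≤ x, feasibility direction) Let A be an n×n matrix over an idempotent semifield with Tr(A) = tr(A) ⊕ ⋯ ⊕ tr(Aⁿ) ≤ 1. Then for every vector u, the vector x = A* u, where A* = I ⊕ A ⊕ ⋯ ⊕ A^{n−1}, satisfies A x ≤ x. -/

import Mathlib

noncomputable section

variable {K : Type*} [LinearOrderedCommGroupWithZero K]

/-- In a linearly ordered idempotent semifield the zero is the bottom element. -/
instance : OrderBot K where
  bot := 0
  bot_le _ := zero_le'

/-- Tropical matrix product over the idempotent semifield: `{AB}_{ij} = ⊕_k a_{ik} b_{kj}`. -/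
def tmul {n : ℕ} (A B : Fin n → Fin n → K) : Fin n → Fin n → K :=
  fun i j => Finset.univ.sup fun k => A i k * B k j

/-- Entrywise tropical sum of matrices. -/
def tadd {n : ℕ} (A B : Fin n → Fin n → K) : Fin n → Fin n → K :=
  fun i j => A i j ⊔ B i j

/-- The tropical identity matrix. -/
def idMat (n : ℕ) : Fin n → Fin n → K :=
  fun i j => if i = j then 1 else 0

/-- Tropical matrix power. -/
def tpow {n : ℕ} (A : Fin n → Fin n → K) : ℕ → (Fin n → Fin n → K)
  | 0 => idMat n
  | m + 1 => tmul A (tpow A m)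

/-- Tropical trace: `tr A = a₁₁ ⊕ ⋯ ⊕ aₙₙ`. -/
def ttr {n : ℕ} (A : Fin n → Fin n → K) : K :=
  Finset.univ.sup fun i => A i i

/-- Tropical matrix-vector product. -/
def matVec {n : ℕ} (A : Fin n → Fin n → K) (x : Fin n → K) : Fin n → K :=
  fun i => Finset.univ.sup fun k => A i k * x k

/-- The Kleene star `A* = I ⊕ A ⊕ ⋯ ⊕ A^{n−1}`. -/
def star {n : ℕ} (A : Fin n → Fin n → K) : Fin n → Fin n → K :=
  fun i j => (Finset.range n).sup fun m => tpow A m i j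

/-- `Tr(A) = tr A ⊕ ⋯ ⊕ tr Aⁿ`. -/
def Tr {n : ℕ} (A : Fin n → Fin n → K) : K :=
  (Finset.Icc 1 n).sup fun m => ttr (tpow A m)

/-!
Since `A A* = A ⊕ ⋯ ⊕ Aⁿ`, it suffices to show `Aⁿ ≤ A*`. The entry `(Aᵐ)ᵢⱼ` is the largest
weight of a walk of length `m` from `i` to `j`. A walk of length `n` visits `n + 1`
vertices and therefore contains a closed subwalk of length `k ∈ [1, n]`, whose weight is at most
`tr Aᵏ ≤ Tr A ≤ 1`. Cutting it out leaves a walk of length `< n` between the same endpoints and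
of no smaller weight, which is bounded by `A*`. Finally `A (A* u) = (A A*) u ≤ A* u`.
-/

lemma mul_finset_sup {ι : Type*} (a : K) (s : Finset ι) (f : ι → K) :
    a * s.sup f = s.sup (a * f ·) :=
  Finset.apply_sup_eq_sup_comp_of_linearOrder (a * ·) (fun _ _ h => mul_le_mul_right h a)
    (mul_zero a)

lemma finset_sup_mul {ι : Type*} (a : K) (s : Finset ι) (f : ι → K) :
    s.sup f * a = s.sup (f · * a) := by
  simpa only [mul_comm a] using mul_finset_sup a s f

lemma List.getLastD_append {α : Type*} (l₁ l₂ : List α) (a : α) :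
    (l₁ ++ l₂).getLastD a = l₂.getLastD (l₁.getLastD a) := by
  induction l₁ generalizing a with
  | nil => rfl
  | cons b l₁ ih => simp only [List.cons_append, List.getLastD_cons, ih]

section Walk

variable {α : Type*}

/-- Weight of the walk `i → l₁ → ⋯ → lₖ`; it ends at `l.getLastD i`. -/
def walkWeight (A : α → α → K) : α → List α → K
  | _, [] => 1
  | i, k :: l => A i k * walkWeight A k l

lemma walkWeight_append (A : α → α → K) (i : α) (l₁ l₂ : List α) :
    walkWeight A i (l₁ ++ l₂) = walkWeight A i l₁ * walkWeight A (l₁.getLastD i) l₂ := by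
  induction l₁ generalizing i with
  | nil => simp [walkWeight]
  | cons k l₁ ih => simp only [List.cons_append, walkWeight, ih, List.getLastD_cons, mul_assoc]

lemma exists_closed_subwalk_of_not_nodup {i : α} {l : List α} (h : ¬ (i :: l).Nodup) :
    ∃ t c r : List α, l = t ++ c ++ r ∧ c ≠ [] ∧ c.getLastD (t.getLastD i) = t.getLastD i := by
  induction l generalizing i with
  | nil => simp at h
  | cons k l ih =>
    by_cases hi : i ∈ k :: l
    · obtain ⟨s, r, hs⟩ := List.append_of_mem hi
      exact ⟨[], s ++ [i], r, by simp [hs], by simp, List.getLastD_concat⟩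
    · obtain ⟨t, c, r, rfl, hc, hcycle⟩ := ih (i := k) fun hk => h (List.nodup_cons.2 ⟨hi, hk⟩)
      exact ⟨k :: t, c, r, rfl, hc, by simpa only [List.getLastD_cons] using hcycle⟩

end Walk

section TropicalMatrix

variable {n : ℕ} (A : Fin n → Fin n → K)

lemma walkWeight_le_tpow (i : Fin n) (l : List (Fin n)) :
    walkWeight A i l ≤ tpow A l.length i (l.getLastD i) := by
  induction l generalizing i with
  | nil => simp [walkWeight, tpow, idMat]
  | cons k l ih =>
    rw [List.getLastD_cons]
    calc walkWeight A i (k :: l) ≤ A i k * tpow A l.length k (l.getLastD k) :=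
          mul_le_mul_right (ih k) _
      _ ≤ tpow A (k :: l).length i (l.getLastD k) :=
          Finset.le_sup (f := fun k' => A i k' * tpow A l.length k' (l.getLastD k))
            (Finset.mem_univ k)

lemma tpow_le_star_of_lt {m : ℕ} (hm : m < n) (i j : Fin n) : tpow A m i j ≤ star A i j :=
  Finset.le_sup (f := fun m => tpow A m i j) (Finset.mem_range.2 hm)

lemma tpow_self_le_Tr {m : ℕ} (hm₁ : 1 ≤ m) (hm : m ≤ n) (i : Fin n) : tpow A m i i ≤ Tr A :=
  calc tpow A m i i ≤ ttr (tpow A m) :=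
        Finset.le_sup (f := fun i => tpow A m i i) (Finset.mem_univ i)
    _ ≤ Tr A := Finset.le_sup (f := fun m => ttr (tpow A m)) (Finset.mem_Icc.2 ⟨hm₁, hm⟩)

lemma exists_walk_of_tpow_ne_zero {m : ℕ} {i j : Fin n} (h : tpow A m i j ≠ 0) :
    ∃ l : List (Fin n), l.length = m ∧ l.getLastD i = j ∧ tpow A m i j = walkWeight A i l := by
  induction m generalizing i with
  | zero =>
    have hij : i = j := by by_contra hij; exact h (if_neg hij)
    exact ⟨[], rfl, hij, by simp [hij, tpow, idMat, walkWeight]⟩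
  | succ m ih =>
    obtain ⟨k, -, hk⟩ := Finset.exists_mem_eq_sup Finset.univ ⟨i, Finset.mem_univ i⟩
      fun k => A i k * tpow A m k j
    have hsucc : tpow A (m + 1) i j = A i k * tpow A m k j := hk
    obtain ⟨l, hlen, hend, hw⟩ := ih (i := k) (right_ne_zero_of_mul (hsucc ▸ h))
    exact ⟨k :: l, by simp [hlen], by rwa [List.getLastD_cons], by rw [hsucc, hw]; rfl⟩

variable {A}

lemma walkWeight_le_one_of_closed (hTr : Tr A ≤ 1) {a : Fin n} {c : List (Fin n)}
    (hne : c ≠ []) (hlen : c.length ≤ n) (hclosed : c.getLastD a = a) : walkWeight A a c ≤ 1 :=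
  calc walkWeight A a c ≤ tpow A c.length a a := by
        simpa only [hclosed] using walkWeight_le_tpow A a c
    _ ≤ Tr A := tpow_self_le_Tr A (List.length_pos_iff.2 hne) hlen a
    _ ≤ 1 := hTr

lemma walkWeight_le_star (hTr : Tr A ≤ 1) (i : Fin n) {l : List (Fin n)} (hlen : l.length ≤ n) :
    walkWeight A i l ≤ star A i (l.getLastD i) := by
  rcases hlen.lt_or_eq with hlt | heq
  · exact (walkWeight_le_tpow A i l).trans (tpow_le_star_of_lt A hlt i _)
  have hdup : ¬ (i :: l).Nodup := fun hnd => by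
    simpa [heq] using hnd.length_le_card
  obtain ⟨t, c, r, rfl, hne, hclosed⟩ := exists_closed_subwalk_of_not_nodup hdup
  have hc : walkWeight A (t.getLastD i) c ≤ 1 :=
    walkWeight_le_one_of_closed hTr hne (by simp only [List.length_append] at heq; omega) hclosed
  have hshort : (t ++ r).length < n := by
    have := List.length_pos_iff.2 hne
    simp only [List.length_append] at heq ⊢; omega
  have hend : (t ++ c ++ r).getLastD i = (t ++ r).getLastD i := by
    simp only [List.getLastD_append, hclosed]
  calc walkWeight A i (t ++ c ++ r)
      = walkWeight A i t * walkWeight A (t.getLastD i) c * walkWeight A (t.getLastD i) r := by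
        rw [walkWeight_append, walkWeight_append, List.getLastD_append, hclosed]
    _ ≤ walkWeight A i t * 1 * walkWeight A (t.getLastD i) r := by gcongr
    _ = walkWeight A i (t ++ r) := by rw [mul_one, walkWeight_append]
    _ ≤ star A i ((t ++ c ++ r).getLastD i) :=
        hend ▸ (walkWeight_le_tpow A i _).trans (tpow_le_star_of_lt A hshort i _)

lemma tpow_le_star (hTr : Tr A ≤ 1) {m : ℕ} (hm : m ≤ n) (i j : Fin n) :
    tpow A m i j ≤ star A i j := by
  by_cases h : tpow A m i j = 0
  · exact h ▸ zero_le
  obtain ⟨l, rfl, rfl, hw⟩ := exists_walk_of_tpow_ne_zero A h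
  exact hw ▸ walkWeight_le_star hTr i hm

lemma tmul_star_le_star (hTr : Tr A ≤ 1) (i j : Fin n) : tmul A (star A) i j ≤ star A i j := by
  refine Finset.sup_le fun k _ => ?_
  change A i k * (Finset.range n).sup (tpow A · k j) ≤ _
  rw [mul_finset_sup]
  refine Finset.sup_le fun m hm => ?_
  calc A i k * tpow A m k j ≤ tpow A (m + 1) i j :=
        Finset.le_sup (f := fun k => A i k * tpow A m k j) (Finset.mem_univ k)
    _ ≤ star A i j := tpow_le_star hTr (Finset.mem_range.1 hm) i j

lemma matVec_matVec (A B : Fin n → Fin n → K) (u : Fin n → K) :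
    matVec A (matVec B u) = matVec (tmul A B) u := by
  funext i
  simp only [matVec, tmul, mul_finset_sup, finset_sup_mul, mul_assoc]
  exact Finset.sup_comm _ _ _

lemma matVec_le_matVec {B : Fin n → Fin n → K} (h : ∀ i j, A i j ≤ B i j) (u : Fin n → K)
    (i : Fin n) : matVec A u i ≤ matVec B u i :=
  Finset.sup_mono_fun fun k _ => mul_le_mul_left (h i k) (u k)

end TropicalMatrix

/-- If `Tr(A) ≤ 1` then for every vector `u` the vector `x = A* u` solves `A x ≤ x`. -/
theorem star_solves_inequality {n : ℕ} (A : Fin n → Fin n → K) (hTr : Tr A ≤ 1) :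
    ∀ u : Fin n → K, ∀ i, matVec A (matVec (star A) u) i ≤ matVec (star A) u i := by
  intro u i
  rw [matVec_matVec]
  exact matVec_le_matVec (tmul_star_le_star hTr) u i
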